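/- Let Ω, Σ, Ω' ⊂ ℝ^d = ℝ^{d−1} × ℝ be bounded measurable sets of positive Lebesgue measure. Assume that every F ∈ PW(Ω) admits a representation F(x,y) = G(x,y) + H(x,y)·sin(πy) for all (x,y) ∈ ℝ^{d−1} × ℝ, with some G ∈ PW(Σ) and H ∈ PW(Ω'). Let Λ₁ ⊂ ℝ^{d−1} × ℤ be a set of uniqueness for PW(Σ), and let Λ₂ ⊂ ℝ^d be a set of uniqueness for PW(Ω') such that no point (x,y) ∈ Λ₂ has integer last coordinate y. Then Λ₁ ∪ Λ₂ is a set of uniqueness for PW(Ω). -/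

import Mathlib

open MeasureTheory Complex
open scoped RealInnerProductSpace Pointwise

noncomputable section

/-- The Paley–Wiener space of a set `Ω ⊆ ℝ^{m} × ℝ`. -/
def PWprod {m : ℕ} (Ω : Set (EuclideanSpace ℝ (Fin m) × ℝ)) :
    Set (EuclideanSpace ℝ (Fin m) × ℝ → ℂ) :=
  {F | ∃ f : EuclideanSpace ℝ (Fin m) × ℝ → ℂ, MemLp f 2 (volume.restrict Ω) ∧
    ∀ t, F t = ∫ p in Ω,
      f p * Complex.exp (-(2 * Real.pi * Complex.I * (((⟪ t.1, p.1 ⟫ : ℝ) + t.2 * p.2 : ℝ) : ℂ)))}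

/-- `Λ` is a set of uniqueness for `PW(Ω)`, `Ω ⊆ ℝ^{m} × ℝ`. -/
def IsUniquenessSetProd {m : ℕ} (Λ Ω : Set (EuclideanSpace ℝ (Fin m) × ℝ)) : Prop :=
  ∀ F ∈ PWprod Ω, (∀ l ∈ Λ, F l = 0) → ∀ t, F t = 0

/-! Write `F = G + H · sin(π y)`. On `Λ₁` the sine vanishes, so `G` vanishes on `Λ₁` and hence
everywhere; then `F = H · sin(π y)`, and on `Λ₂` the sine does not vanish, so `H` vanishes on `Λ₂`
and hence everywhere. -/

theorem Real.sin_pi_mul_eq_zero_iff {y : ℝ} : Real.sin (Real.pi * y) = 0 ↔ ∃ k : ℤ, y = k := by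
  rw [Real.sin_eq_zero_iff]
  refine exists_congr fun k => ⟨fun h => ?_, fun h => by rw [h, mul_comm]⟩
  exact (mul_left_cancel₀ Real.pi_ne_zero (by rw [← h, mul_comm])).symm

theorem union_uniqueness_set_general
    (m : ℕ) (Ω S Ω' : Set (EuclideanSpace ℝ (Fin m) × ℝ))
    (hdec : ∀ F ∈ PWprod Ω, ∃ G ∈ PWprod S, ∃ H ∈ PWprod Ω',
      ∀ p : EuclideanSpace ℝ (Fin m) × ℝ,
        F p = G p + H p * ((Real.sin (Real.pi * p.2) : ℝ) : ℂ))
    (Λ₁ Λ₂ : Set (EuclideanSpace ℝ (Fin m) × ℝ))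
    (hΛ₁int : ∀ p ∈ Λ₁, ∃ k : ℤ, p.2 = (k : ℝ))
    (hΛ₁ : IsUniquenessSetProd Λ₁ S)
    (hΛ₂ : IsUniquenessSetProd Λ₂ Ω')
    (hΛ₂int : ∀ p ∈ Λ₂, ¬ ∃ k : ℤ, p.2 = (k : ℝ)) :
    IsUniquenessSetProd (Λ₁ ∪ Λ₂) Ω := by
  intro F hF hFΛ
  obtain ⟨G, hG, H, hH, hFGH⟩ := hdec F hF
  have hG0 : ∀ p, G p = 0 := hΛ₁ G hG fun l hl => by
    simpa [hFGH, Real.sin_pi_mul_eq_zero_iff.2 (hΛ₁int l hl)] using hFΛ l (.inl hl)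
  have hH0 : ∀ p, H p = 0 := hΛ₂ H hH fun l hl => by
    have hsin : Real.sin (Real.pi * l.2) ≠ 0 :=
      mt Real.sin_pi_mul_eq_zero_iff.1 (hΛ₂int l hl)
    have hFl := hFΛ l (.inr hl)
    rw [hFGH, hG0, zero_add] at hFl
    exact (mul_eq_zero.1 hFl).resolve_right (Complex.ofReal_ne_zero.2 hsin)
  intro t
  simp [hFGH, hG0, hH0]

theorem union_uniqueness_set
    (m : ℕ) (Ω S Ω' : Set (EuclideanSpace ℝ (Fin m) × ℝ))
    (hΩ : Bornology.IsBounded Ω) (hΩm : MeasurableSet Ω) (hΩp : 0 < volume Ω)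
    (hS : Bornology.IsBounded S) (hSm : MeasurableSet S) (hSp : 0 < volume S)
    (hΩ' : Bornology.IsBounded Ω') (hΩ'm : MeasurableSet Ω') (hΩ'p : 0 < volume Ω')
    (hdec : ∀ F ∈ PWprod Ω, ∃ G ∈ PWprod S, ∃ H ∈ PWprod Ω',
      ∀ p : EuclideanSpace ℝ (Fin m) × ℝ,
        F p = G p + H p * ((Real.sin (Real.pi * p.2) : ℝ) : ℂ))
    (Λ₁ Λ₂ : Set (EuclideanSpace ℝ (Fin m) × ℝ))
    (hΛ₁int : ∀ p ∈ Λ₁, ∃ k : ℤ, p.2 = (k : ℝ))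
    (hΛ₁ : IsUniquenessSetProd Λ₁ S)
    (hΛ₂ : IsUniquenessSetProd Λ₂ Ω')
    (hΛ₂int : ∀ p ∈ Λ₂, ¬ ∃ k : ℤ, p.2 = (k : ℝ)) :
    IsUniquenessSetProd (Λ₁ ∪ Λ₂) Ω :=
  union_uniqueness_set_general m Ω S Ω' hdec Λ₁ Λ₂ hΛ₁int hΛ₁ hΛ₂ hΛ₂int
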